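/- arXiv:2108.06251 — 9 statements merged into one kernel-verified Lean document; each statement's English description precedes it below -/
import Mathlib

section
/- (KKT characterization of the lower-level problem) Fix x ∈ ℝᵐ and ℓ ∈ ℝᵐ, and suppose the set {y ∈ ℝᵐ : y ≥ ℓ, F y = d} is nonempty. Then a vector y minimizes the function y ↦ ½ yᵀ R y + (c − x)ᵀ y over {y : y ≥ ℓ, F y = d} if and only if there exists μ ∈ ℝᵐ with μ ≥ 0 such that y = M(x + μ) + r, y ≥ ℓ, and μᵀ(y − ℓ) = 0. -/
open Matrix

section Carath

variable {E : Type*} [NormedAddCommGroup E] [InnerProductSpace ℝ E]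

lemma cone_carath {ι : Type*} [Fintype ι] [DecidableEq ι] (v : ι → E) (g : E) :
    ∀ (N : ℕ) (s : Finset ι), s.card ≤ N → ∀ t : ι → ℝ, (∀ i, 0 ≤ t i) →
      ∑ i ∈ s, t i • v i = g →
      ∃ s' : Finset ι, LinearIndependent ℝ (fun i : s' => v (i : ι)) ∧
        ∃ t' : ι → ℝ, (∀ i, 0 ≤ t' i) ∧ ∑ i ∈ s', t' i • v i = g := by
  intro N
  induction N with
  | zero =>
    intro s hs t ht hsum
    have hse : s = ∅ := Finset.card_eq_zero.mp (Nat.le_zero.mp hs)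
    subst hse
    refine ⟨∅, ?_, t, ht, hsum⟩
    have : IsEmpty ((∅ : Finset ι) : Type _) := ⟨fun x => Finset.notMem_empty _ x.2⟩
    exact linearIndependent_empty_type
  | succ N ih =>
    intro s hs t ht hsum
    by_cases hLI : LinearIndependent ℝ (fun i : s => v (i : ι))
    · exact ⟨s, hLI, t, ht, hsum⟩
    · -- get a dependence with a positive coefficient
      obtain ⟨c, hcsupp, hcsum, i₁, hi₁s, hi₁pos⟩ :
          ∃ c : ι → ℝ, (∀ i ∉ s, c i = 0) ∧ (∑ i ∈ s, c i • v i = 0) ∧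
            ∃ i ∈ s, 0 < c i := by
        obtain ⟨c₀, hc₀sum, j, hj⟩ := Fintype.not_linearIndependent_iff.mp hLI
        have hc₀sum' : ∑ i ∈ s, (fun i => if h : i ∈ s then c₀ ⟨i, h⟩ else 0) i • v i = 0 := by
          rw [← hc₀sum, ← Finset.sum_coe_sort s (fun i => (if h : i ∈ s then c₀ ⟨i, h⟩ else 0) • v i)]
          refine Finset.sum_congr rfl ?_
          intro i _
          simp
        rcases lt_or_gt_of_ne hj with hneg | hpos
        · refine ⟨fun i => if h : i ∈ s then -c₀ ⟨i, h⟩ else 0, ?_, ?_, j, j.2, ?_⟩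
          · intro i hi; simp [hi]
          · have : ∑ i ∈ s, (fun i => if h : i ∈ s then -c₀ ⟨i, h⟩ else 0) i • v i
                = -∑ i ∈ s, (fun i => if h : i ∈ s then c₀ ⟨i, h⟩ else 0) i • v i := by
              rw [← Finset.sum_neg_distrib]
              refine Finset.sum_congr rfl ?_
              intro i hi
              simp [hi]
            rw [this, hc₀sum', neg_zero]
          · simp only [j.2, dif_pos]
            simpa using neg_pos.mpr hneg
        · refine ⟨fun i => if h : i ∈ s then c₀ ⟨i, h⟩ else 0, ?_, hc₀sum', j, j.2, ?_⟩
          · intro i hi; simp [hi]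
          · simpa [j.2] using hpos
      -- minimize the ratio
      have hTne : (s.filter (fun i => 0 < c i)).Nonempty :=
        ⟨i₁, Finset.mem_filter.mpr ⟨hi₁s, hi₁pos⟩⟩
      obtain ⟨i₀, hi₀T, hi₀min⟩ := Finset.exists_min_image _ (fun i => t i / c i) hTne
      obtain ⟨hi₀s, hi₀pos⟩ := Finset.mem_filter.mp hi₀T
      set α := t i₀ / c i₀ with hα
      have hαnn : 0 ≤ α := div_nonneg (ht i₀) hi₀pos.le
      set t' : ι → ℝ := fun i => if i ∈ s then t i - α * c i else 0 with ht'
      have ht'nn : ∀ i, 0 ≤ t' i := by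
        intro i
        by_cases hi : i ∈ s
        · simp only [ht', hi, if_pos]
          rcases le_or_gt (c i) 0 with hc | hc
          · nlinarith [ht i]
          · have := hi₀min i (Finset.mem_filter.mpr ⟨hi, hc⟩)
            have : α * c i ≤ t i := by
              rw [hα] at this ⊢
              calc t i₀ / c i₀ * c i ≤ t i / c i * c i := by
                    exact mul_le_mul_of_nonneg_right this hc.le
                _ = t i := div_mul_cancel₀ _ hc.ne'
            linarith
        · simp [ht', hi]
      have ht'i₀ : t' i₀ = 0 := by
        simp only [ht', hi₀s, if_pos, hα]
        rw [div_mul_cancel₀ _ hi₀pos.ne']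
        ring
      have hsum' : ∑ i ∈ s.erase i₀, t' i • v i = g := by
        rw [Finset.sum_erase _ (by rw [ht'i₀, zero_smul])]
        have : ∑ i ∈ s, t' i • v i = (∑ i ∈ s, t i • v i) - α • ∑ i ∈ s, c i • v i := by
          rw [Finset.smul_sum, ← Finset.sum_sub_distrib]
          refine Finset.sum_congr rfl ?_
          intro i hi
          simp only [ht', hi, if_pos]
          rw [sub_smul, smul_smul]
        rw [this, hcsum, smul_zero, sub_zero, hsum]
      exact ih (s.erase i₀) (by
        have := Finset.card_erase_of_mem hi₀s
        omega) t' ht'nn hsum'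

end Carath


section Farkas

variable {E : Type*} [NormedAddCommGroup E] [InnerProductSpace ℝ E] [FiniteDimensional ℝ E]

lemma isClosed_cone {ι : Type*} [Fintype ι] [DecidableEq ι] (v : ι → E)
    (hcara : ∀ g : E, (∃ t : ι → ℝ, (∀ i, 0 ≤ t i) ∧ ∑ i, t i • v i = g) →
      ∃ s' : Finset ι, LinearIndependent ℝ (fun i : s' => v (i : ι)) ∧
        ∃ t' : ι → ℝ, (∀ i, 0 ≤ t' i) ∧ ∑ i ∈ s', t' i • v i = g) :
    IsClosed {g : E | ∃ t : ι → ℝ, (∀ i, 0 ≤ t i) ∧ ∑ i, t i • v i = g} := by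
  have hset : {g : E | ∃ t : ι → ℝ, (∀ i, 0 ≤ t i) ∧ ∑ i, t i • v i = g}
      = ⋃ s ∈ {s : Finset ι | LinearIndependent ℝ (fun i : s => v (i : ι))},
        {g : E | ∃ t : ι → ℝ, (∀ i, 0 ≤ t i) ∧ ∑ i ∈ s, t i • v i = g} := by
    ext g
    simp only [Set.mem_setOf_eq, Set.mem_iUnion]
    constructor
    · intro hg
      obtain ⟨s', hs', t', ht', hsum'⟩ := hcara g hg
      exact ⟨s', hs', t', ht', hsum'⟩
    · rintro ⟨s, hs, t, ht, hsum⟩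
      refine ⟨fun i => if i ∈ s then t i else 0,
        fun i => by dsimp only; split
                    exacts [ht _, le_rfl], ?_⟩
      rw [← hsum]
      rw [← Finset.sum_subset (Finset.subset_univ s)]
      · exact Finset.sum_congr rfl fun i hi => by simp [hi]
      · intro i _ hi
        simp [hi]
  rw [hset]
  refine Set.Finite.isClosed_biUnion (Set.toFinite _) ?_
  intro s hs
  -- the simplicial cone over a linearly independent family is closed
  classical
  let L : (↥s → ℝ) →ₗ[ℝ] E :=
    { toFun := fun t => ∑ i, t i • v (i : ι)
      map_add' := by
        intro a b
        simp [add_smul, Finset.sum_add_distrib]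
      map_smul' := by
        intro r a
        simp [smul_smul, Finset.smul_sum] }
  have hker : LinearMap.ker L = ⊥ := by
    rw [LinearMap.ker_eq_bot']
    intro t htz
    have := (Fintype.linearIndependent_iff.mp hs) t htz
    funext i
    exact this i
  have hemb := LinearMap.isClosedEmbedding_of_injective hker
  have horth : IsClosed {t : ↥s → ℝ | ∀ i, 0 ≤ t i} := by
    have : {t : ↥s → ℝ | ∀ i, 0 ≤ t i} = ⋂ i, {t | 0 ≤ t i} := by
      ext t; simp
    rw [this]
    exact isClosed_iInter fun i => isClosed_le continuous_const (continuous_apply i)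
  have himg : {g : E | ∃ t : ι → ℝ, (∀ i, 0 ≤ t i) ∧ ∑ i ∈ s, t i • v i = g}
      = L '' {t : ↥s → ℝ | ∀ i, 0 ≤ t i} := by
    ext g
    simp only [Set.mem_setOf_eq, Set.mem_image]
    constructor
    · rintro ⟨t, ht, hsum⟩
      refine ⟨fun i => t (i : ι), fun i => ht _, ?_⟩
      show ∑ i : ↥s, t (i : ι) • v (i : ι) = g
      rw [Finset.sum_coe_sort s (fun i => t i • v i)]
      exact hsum
    · rintro ⟨t, ht, hsum⟩
      refine ⟨fun i => if h : i ∈ s then t ⟨i, h⟩ else 0, ?_, ?_⟩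
      · intro i
        by_cases h : i ∈ s
        · simpa [h] using ht ⟨i, h⟩
        · simp [h]
      · rw [← hsum]
        show _ = ∑ i : ↥s, t i • v (i : ι)
        rw [← Finset.sum_coe_sort s (fun i => (if h : i ∈ s then (t ⟨i, h⟩ : ℝ) else 0) • v i)]
        refine Finset.sum_congr rfl ?_
        intro i _
        simp
  rw [himg]
  exact hemb.isClosedMap _ horth

lemma farkas_aux {ι : Type*} [Fintype ι] [DecidableEq ι] (v : ι → E) (g : E)
    (hg : ∀ w : E, (∀ i, 0 ≤ (inner ℝ (v i) w : ℝ)) → 0 ≤ (inner ℝ g w : ℝ)) :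
    ∃ t : ι → ℝ, (∀ i, 0 ≤ t i) ∧ ∑ i, t i • v i = g := by
  by_contra hcon
  let K : ConvexCone ℝ E :=
    { carrier := {z : E | ∃ t : ι → ℝ, (∀ i, 0 ≤ t i) ∧ ∑ i, t i • v i = z}
      smul_mem' := by
        rintro a ha z ⟨t, ht, hsum⟩
        refine ⟨fun i => a * t i, fun i => mul_nonneg ha.le (ht i), ?_⟩
        rw [← hsum, Finset.smul_sum]
        exact Finset.sum_congr rfl fun i _ => (smul_smul a (t i) (v i)).symm
      add_mem' := by
        rintro z ⟨t, ht, hsum⟩ z' ⟨t', ht', hsum'⟩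
        refine ⟨fun i => t i + t' i, fun i => add_nonneg (ht i) (ht' i), ?_⟩
        rw [← hsum, ← hsum', ← Finset.sum_add_distrib]
        exact Finset.sum_congr rfl fun i _ => by rw [add_smul] }
  have hKclosed : IsClosed (K : Set E) := by
    refine isClosed_cone v ?_
    intro g' ⟨t, ht, hsum⟩
    have := cone_carath v g' (Finset.univ.card) Finset.univ le_rfl t ht hsum
    exact this
  have hKne : (K : Set E).Nonempty := ⟨0, fun _ => 0, fun i => le_rfl, by simp⟩
  have hgK : g ∉ K := by
    intro ⟨t, ht, hsum⟩
    exact hcon ⟨t, ht, hsum⟩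
  let C : ProperCone ℝ E :=
    { carrier := (K : Set E)
      add_mem' := fun ha hb => K.add_mem ha hb
      zero_mem' := ⟨fun _ => 0, fun _ => le_rfl, by simp⟩
      smul_mem' := by
        rintro a z ⟨t, ht, hsum⟩
        refine ⟨fun i => (a : ℝ) * t i, fun i => mul_nonneg a.2 (ht i), ?_⟩
        rw [← hsum]
        show _ = (a : ℝ) • (∑ i, t i • v i : E)
        rw [Finset.smul_sum]
        exact Finset.sum_congr rfl fun i _ => (smul_smul (a : ℝ) (t i) (v i)).symm
      isClosed' := hKclosed }
  obtain ⟨w, hw1, hw2⟩ :=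
    C.hyperplane_separation' (x₀ := g) (show g ∉ C from hgK)
  have hvw : ∀ i, 0 ≤ (inner ℝ (v i) w : ℝ) := by
    intro i
    refine hw1 (v i) ⟨fun j => if j = i then 1 else 0, fun j => by by_cases h : j = i <;> simp [h], ?_⟩
    simp [ite_smul]
  have := hg w hvw
  linarith
end Farkas

lemma inner_eq_dot {m : ℕ} (a b : EuclideanSpace ℝ (Fin m)) :
    (inner ℝ a b : ℝ) = (a : Fin m → ℝ) ⬝ᵥ (b : Fin m → ℝ) := by
  simp [PiLp.inner_apply, dotProduct, RCLike.inner_apply, mul_comm]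

lemma farkas_matrix {m n : ℕ} (F : Matrix (Fin n) (Fin m) ℝ) (A : Finset (Fin m))
    (g : Fin m → ℝ)
    (hg : ∀ w : Fin m → ℝ, F *ᵥ w = 0 → (∀ i ∈ A, 0 ≤ w i) → 0 ≤ g ⬝ᵥ w) :
    ∃ (l : Fin n → ℝ) (μ : Fin m → ℝ), (∀ i, 0 ≤ μ i) ∧ (∀ i, i ∉ A → μ i = 0) ∧
      g = Fᵀ *ᵥ l + μ := by
  classical
  let E := EuclideanSpace ℝ (Fin m)
  let v : (Fin n ⊕ Fin n) ⊕ Fin m → E := fun j => WithLp.toLp 2 <|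
    Sum.elim (Sum.elim (fun a => (fun i => F a i : Fin m → ℝ))
      (fun a => (fun i => - F a i : Fin m → ℝ)))
      (fun i => if i ∈ A then (Pi.single i 1 : Fin m → ℝ) else (0 : Fin m → ℝ)) j
  have hdot : ∀ (j) (w : E), (inner ℝ (v j) w : ℝ) = (v j : Fin m → ℝ) ⬝ᵥ (w : Fin m → ℝ) :=
    fun j w => inner_eq_dot _ _
  let gE : E := WithLp.toLp 2 g
  have hyp : ∀ w : E, (∀ j, 0 ≤ (inner ℝ (v j) w : ℝ)) → 0 ≤ (inner ℝ gE w : ℝ) := by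
    intro w hw
    have hFw : F *ᵥ (w : Fin m → ℝ) = 0 := by
      funext a
      have h1 := hw (Sum.inl (Sum.inl a))
      have h2 := hw (Sum.inl (Sum.inr a))
      rw [hdot] at h1 h2
      simp only [v, Sum.elim_inl, Sum.elim_inr, WithLp.ofLp_toLp] at h1 h2
      have e1 : 0 ≤ (F *ᵥ (w : Fin m → ℝ)) a := h1
      have e2 : 0 ≤ -((F *ᵥ (w : Fin m → ℝ)) a) := by
        have heq : ((fun i => - F a i) ⬝ᵥ (w : Fin m → ℝ)) = -((F *ᵥ (w : Fin m → ℝ)) a) := by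
          simp [dotProduct, mulVec, Finset.sum_neg_distrib]
        rw [heq] at h2
        exact h2
      have : (F *ᵥ (w : Fin m → ℝ)) a = 0 := by linarith
      simpa using this
    have hwA : ∀ i ∈ A, 0 ≤ (w : Fin m → ℝ) i := by
      intro i hi
      have := hw (Sum.inr i)
      rw [hdot] at this
      simpa [v, hi, single_dotProduct] using this
    have h0 := hg (w : Fin m → ℝ) hFw hwA
    rw [inner_eq_dot]
    exact h0
  obtain ⟨t, ht, hsum⟩ := farkas_aux v gE hyp
  · refine ⟨fun a => t (Sum.inl (Sum.inl a)) - t (Sum.inl (Sum.inr a)),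
      fun i => if i ∈ A then t (Sum.inr i) else 0, ?_, ?_, ?_⟩
    · intro i
      dsimp only
      split
      exacts [ht _, le_rfl]
    · intro i hi; simp [hi]
    · have hco : ∀ i : Fin m, g i = ∑ j, t j • v j i := by
        intro i
        calc g i = (∑ j, t j • v j : E) i := (congrArg (fun f : E => f i) hsum).symm
          _ = ∑ j, t j • v j i := by rw [WithLp.ofLp_sum, Finset.sum_apply]; rfl
      funext i
      rw [hco i]
      rw [Fintype.sum_sum_type, Fintype.sum_sum_type]
      have h3 : ∑ i' : Fin m, t (Sum.inr i') • v (Sum.inr i') i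
          = if i ∈ A then t (Sum.inr i) else 0 := by
        rw [Finset.sum_eq_single i]
        · by_cases h : i ∈ A <;> simp [v, h]
        · intro b _ hbi
          by_cases h : b ∈ A <;> simp [v, h, Pi.single_apply, Ne.symm hbi]
        · simp
      rw [h3]
      simp only [Pi.add_apply, mulVec, dotProduct, transpose_apply, v, Sum.elim_inl,
        Sum.elim_inr, smul_eq_mul, WithLp.ofLp_toLp]
      have hsplit : ∑ x : Fin n, F x i * (t (Sum.inl (Sum.inl x)) - t (Sum.inl (Sum.inr x)))
          = ∑ x : Fin n, (t (Sum.inl (Sum.inl x)) * F x i + t (Sum.inl (Sum.inr x)) * -F x i) :=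
        Finset.sum_congr rfl fun a _ => by ring
      rw [hsplit, Finset.sum_add_distrib]

lemma dot_nonneg' {m : ℕ} {a b : Fin m → ℝ} (ha : ∀ i, 0 ≤ a i) (hb : ∀ i, 0 ≤ b i) :
    0 ≤ a ⬝ᵥ b :=
  Finset.sum_nonneg fun i _ => mul_nonneg (ha i) (hb i)

lemma quad_expand {m : ℕ} (R : Matrix (Fin m) (Fin m) ℝ) (hsymm : Rᵀ = R)
    (q y z : Fin m → ℝ) :
    (1/2 : ℝ) * (z ⬝ᵥ (R *ᵥ z)) + q ⬝ᵥ z - ((1/2) * (y ⬝ᵥ (R *ᵥ y)) + q ⬝ᵥ y)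
      = (R *ᵥ y + q) ⬝ᵥ (z - y) + (1/2) * ((z - y) ⬝ᵥ (R *ᵥ (z - y))) := by
  have hsym : ∀ a b : Fin m → ℝ, a ⬝ᵥ (R *ᵥ b) = b ⬝ᵥ (R *ᵥ a) := by
    intro a b
    rw [Matrix.dotProduct_mulVec, ← Matrix.mulVec_transpose, hsymm, dotProduct_comm]
  simp only [Matrix.mulVec_sub, dotProduct_sub, sub_dotProduct,
    add_dotProduct]
  rw [hsym y z, dotProduct_comm (R *ᵥ y) z, dotProduct_comm (R *ᵥ y) y]
  ring


/-- (KKT characterization of the lower-level problem) y minimizes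
½ yᵀRy + (c−x)ᵀy over {y : y ≥ ℓ, F y = d} iff there exists μ ≥ 0 with
y = M(x+μ)+r, y ≥ ℓ, μᵀ(y−ℓ) = 0. -/
theorem stmt_4 {m n : ℕ} (hm : 1 ≤ m) (hn : 1 ≤ n) (hnm : n ≤ m)
    (R : Matrix (Fin m) (Fin m) ℝ) (hR : R.PosDef)
    (F : Matrix (Fin n) (Fin m) ℝ) (hF : F.rank = n)
    (c : Fin m → ℝ) (d : Fin n → ℝ) (ℓ : Fin m → ℝ) (x : Fin m → ℝ)
    (M : Matrix (Fin m) (Fin m) ℝ)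
    (hM : M = R⁻¹ - R⁻¹ * Fᵀ * (F * R⁻¹ * Fᵀ)⁻¹ * (F * R⁻¹))
    (r : Fin m → ℝ)
    (hr : r = (R⁻¹ * Fᵀ * (F * R⁻¹ * Fᵀ)⁻¹) *ᵥ d - M *ᵥ c)
    (hfeas : ∃ y : Fin m → ℝ, ℓ ≤ y ∧ F *ᵥ y = d)
    (y : Fin m → ℝ) :
    (ℓ ≤ y ∧ F *ᵥ y = d ∧
      ∀ z : Fin m → ℝ, ℓ ≤ z → F *ᵥ z = d →
        (1/2) * (y ⬝ᵥ (R *ᵥ y)) + (c - x) ⬝ᵥ y ≤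
          (1/2) * (z ⬝ᵥ (R *ᵥ z)) + (c - x) ⬝ᵥ z)
    ↔ ∃ μ : Fin m → ℝ, 0 ≤ μ ∧ y = M *ᵥ (x + μ) + r ∧ ℓ ≤ y ∧ μ ⬝ᵥ (y - ℓ) = 0 := by
  classical
  -- basic invertibility facts
  have hRdet : IsUnit R.det := (Matrix.isUnit_iff_isUnit_det R).mp hR.isUnit
  have hR1 : R * R⁻¹ = 1 := Matrix.mul_nonsing_inv R hRdet
  have hR2 : R⁻¹ * R = 1 := Matrix.nonsing_inv_mul R hRdet
  have hRi : R⁻¹.PosDef := hR.inv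
  -- injectivity of Fᵀ *ᵥ ·
  have hFTinj : ∀ u : Fin n → ℝ, Fᵀ *ᵥ u = 0 → u = 0 := by
    have hrankT : Fᵀ.rank = n := by rw [Matrix.rank_transpose]; exact hF
    have hr2 : Module.finrank ℝ (LinearMap.range Fᵀ.mulVecLin) = n := hrankT
    have h1 := LinearMap.finrank_range_add_finrank_ker (Fᵀ.mulVecLin)
    have hfin : Module.finrank ℝ (Fin n → ℝ) = n := Module.finrank_fin_fun ℝ
    have hker0 : Module.finrank ℝ (LinearMap.ker Fᵀ.mulVecLin) = 0 := by
      rw [hr2, hfin] at h1; omega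
    have hkerbot : LinearMap.ker Fᵀ.mulVecLin = ⊥ := Submodule.finrank_eq_zero.mp hker0
    intro u hu
    have : Fᵀ.mulVecLin u = 0 := hu
    have := LinearMap.ker_eq_bot.mp hkerbot (a₁ := u) (a₂ := 0) (by simpa using this)
    exact this
  -- the Schur-type matrix S is positive definite
  set S := F * R⁻¹ * Fᵀ with hSdef
  have hS : S.PosDef := by
    refine Matrix.PosDef.of_dotProduct_mulVec_pos ?_ ?_
    · show Sᴴ = S
      calc Sᴴ = (F * R⁻¹ * Fᵀ)ᵀ := rfl
        _ = Fᵀᵀ * (F * R⁻¹)ᵀ := Matrix.transpose_mul _ _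
        _ = F * (R⁻¹ᵀ * Fᵀ) := by rw [Matrix.transpose_transpose, Matrix.transpose_mul]
        _ = F * (R⁻¹ * Fᵀ) := by rw [show R⁻¹ᵀ = R⁻¹ from hRi.1]
        _ = S := by rw [hSdef, Matrix.mul_assoc]
    · intro u hu
      have hvne : Fᵀ *ᵥ u ≠ 0 := fun h => hu (hFTinj u h)
      have := hRi.dotProduct_mulVec_pos hvne
      have hcalc : star u ⬝ᵥ (S *ᵥ u) = star (Fᵀ *ᵥ u) ⬝ᵥ (R⁻¹ *ᵥ (Fᵀ *ᵥ u)) := by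
        rw [show star u = u from star_trivial u, show star (Fᵀ *ᵥ u) = Fᵀ *ᵥ u from
          star_trivial _]
        rw [hSdef, ← Matrix.mulVec_mulVec, ← Matrix.mulVec_mulVec,
          Matrix.dotProduct_mulVec u F, ← Matrix.mulVec_transpose]
      rw [hcalc]
      exact this
  have hSdet : IsUnit S.det := (Matrix.isUnit_iff_isUnit_det S).mp hS.isUnit
  have hS1 : S * S⁻¹ = 1 := Matrix.mul_nonsing_inv S hSdet
  have hS2 : S⁻¹ * S = 1 := Matrix.nonsing_inv_mul S hSdet
  -- abbreviations
  set G := R⁻¹ * Fᵀ with hGdef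
  set T := S⁻¹ * (F * R⁻¹) with hTdef
  have hM2 : M = R⁻¹ - G * T := by
    rw [hM, Matrix.mul_assoc G S⁻¹ (F * R⁻¹)]
  have hFG : F * G = S := by rw [hGdef, ← Matrix.mul_assoc, hSdef]
  have hRG : R * G = Fᵀ := by rw [hGdef, ← Matrix.mul_assoc, hR1, Matrix.one_mul]
  have hFM : F * M = 0 := by
    rw [hM2, Matrix.mul_sub, ← Matrix.mul_assoc, hFG, hTdef, ← Matrix.mul_assoc, hS1,
      Matrix.one_mul, sub_self]
  have hTFt : T * Fᵀ = 1 := by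
    rw [hTdef, Matrix.mul_assoc, ← hSdef, hS2]
  have hMFt : M * Fᵀ = 0 := by
    rw [hM2, Matrix.sub_mul, Matrix.mul_assoc G T Fᵀ, hTFt, Matrix.mul_one, ← hGdef, sub_self]
  have hRM : R * M = 1 - Fᵀ * T := by
    rw [hM2, Matrix.mul_sub, hR1, ← Matrix.mul_assoc, hRG]
  have hTR : T * R = S⁻¹ * F := by
    rw [hTdef, Matrix.mul_assoc, Matrix.mul_assoc, hR2, Matrix.mul_one]
  have hMR : M * R = 1 - G * (S⁻¹ * F) := by
    rw [hM2, Matrix.sub_mul, hR2, Matrix.mul_assoc, hTR]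
  have hFGS : F * (G * S⁻¹) = 1 := by rw [← Matrix.mul_assoc, hFG, hS1]
  have hRGS : R * (G * S⁻¹) = Fᵀ * S⁻¹ := by rw [← Matrix.mul_assoc, hRG]
  have hrr : r = (G * S⁻¹) *ᵥ d - M *ᵥ c := by
    rw [hr, Matrix.mul_assoc R⁻¹ Fᵀ S⁻¹]
  have hRsymm : Rᵀ = R := hR.1
  have hPSD : ∀ w : Fin m → ℝ, 0 ≤ w ⬝ᵥ (R *ᵥ w) := fun w => by
    simpa using hR.posSemidef.dotProduct_mulVec_nonneg w
  constructor
  · -- minimality → KKT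
    rintro ⟨hyl, hFy, hmin⟩
    set g := R *ᵥ y + (c - x) with hgdef
    set A : Finset (Fin m) := Finset.univ.filter (fun i => y i = ℓ i) with hAdef
    have hg : ∀ w : Fin m → ℝ, F *ᵥ w = 0 → (∀ i ∈ A, 0 ≤ w i) → 0 ≤ g ⬝ᵥ w := by
      intro w hFw hwA
      by_contra hneg
      push_neg at hneg
      -- a positive step size keeping feasibility
      have hne : (Finset.univ : Finset (Fin m)).Nonempty := ⟨⟨0, hm⟩, Finset.mem_univ _⟩
      set h : Fin m → ℝ := fun i => if y i = ℓ i then 1 else (y i - ℓ i) / (|w i| + 1) with hh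
      have hhpos : ∀ i, 0 < h i := by
        intro i
        rw [hh]
        dsimp only
        split
        · exact one_pos
        · rename_i hne'
          have : ℓ i < y i := lt_of_le_of_ne (hyl i) (fun he => hne' he.symm)
          exact div_pos (by linarith) (by positivity)
      set t₁ := Finset.univ.inf' hne h with ht₁
      have ht₁pos : 0 < t₁ := (Finset.lt_inf'_iff hne).mpr fun i _ => hhpos i
      set q := (1/2 : ℝ) * (w ⬝ᵥ (R *ᵥ w)) with hq
      have hqnn : 0 ≤ q := by rw [hq]; have := hPSD w; linarith
      set t := min t₁ ((-(g ⬝ᵥ w)) / (2 * (q + 1))) with htdef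
      have htpos : 0 < t := by
        apply lt_min ht₁pos
        apply div_pos (by linarith) (by linarith)
      set z := y + t • w with hz
      have hzfeas : ℓ ≤ z := by
        intro i
        rw [hz]
        by_cases hi : y i = ℓ i
        · have hwi : 0 ≤ w i := hwA i (by simp [hAdef, hi])
          have : 0 ≤ t * w i := mul_nonneg htpos.le hwi
          simp only [Pi.add_apply, Pi.smul_apply, smul_eq_mul]
          linarith [hyl i]
        · have hti : t ≤ (y i - ℓ i) / (|w i| + 1) := by
            calc t ≤ t₁ := min_le_left _ _
              _ ≤ h i := Finset.inf'_le h (Finset.mem_univ i)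
              _ = (y i - ℓ i) / (|w i| + 1) := by rw [hh]; simp [hi]
          have habs : t * (|w i| + 1) ≤ y i - ℓ i := by
            rw [div_eq_mul_inv] at hti
            have hpos : (0:ℝ) < |w i| + 1 := by positivity
            calc t * (|w i| + 1) ≤ ((y i - ℓ i) * (|w i| + 1)⁻¹) * (|w i| + 1) :=
                  mul_le_mul_of_nonneg_right hti hpos.le
              _ = y i - ℓ i := by field_simp
          have hwabs : -(t * |w i|) ≤ t * w i := by
            have h' := mul_le_mul_of_nonneg_left (neg_abs_le (w i)) htpos.le
            linarith [h']
          simp only [Pi.add_apply, Pi.smul_apply, smul_eq_mul]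
          have hexpand : t * (|w i| + 1) = t * |w i| + t := by ring
          linarith
      have hzeq : F *ᵥ z = d := by
        rw [hz, Matrix.mulVec_add, hFy, Matrix.mulVec_smul, hFw, smul_zero, add_zero]
      have hle := hmin z hzfeas hzeq
      have hexp := quad_expand R hRsymm (c - x) y z
      have hzy : z - y = t • w := by rw [hz]; abel
      have hdot1 : (R *ᵥ y + (c - x)) ⬝ᵥ (z - y) = t * (g ⬝ᵥ w) := by
        rw [hzy, ← hgdef, dotProduct_smul, smul_eq_mul]
      have hdot2 : (z - y) ⬝ᵥ (R *ᵥ (z - y)) = t * (t * (w ⬝ᵥ (R *ᵥ w))) := by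
        rw [hzy, Matrix.mulVec_smul, smul_dotProduct, dotProduct_smul,
          smul_eq_mul, smul_eq_mul]
      rw [hdot1, hdot2] at hexp
      have hkey : 0 ≤ t * (g ⬝ᵥ w) + (1/2) * (t * (t * (w ⬝ᵥ (R *ᵥ w)))) := by linarith
      have hstep : 0 ≤ g ⬝ᵥ w + t * q := by
        have h' : 0 ≤ t * (g ⬝ᵥ w + t * q) := by
          have hexp2 : t * (g ⬝ᵥ w + t * q)
              = t * (g ⬝ᵥ w) + (1/2) * (t * (t * (w ⬝ᵥ (R *ᵥ w)))) := by rw [hq]; ring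
          rw [hexp2]
          exact hkey
        exact (mul_nonneg_iff_of_pos_left htpos).mp h'
      have htq : t * q ≤ (-(g ⬝ᵥ w)) / 2 := by
        have ht2 : t ≤ (-(g ⬝ᵥ w)) / (2 * (q + 1)) := min_le_right _ _
        have h2q : (0:ℝ) < 2 * (q + 1) := by linarith
        have : t * (2 * (q + 1)) ≤ -(g ⬝ᵥ w) := by
          rw [div_eq_mul_inv] at ht2
          calc t * (2 * (q + 1)) ≤ ((-(g ⬝ᵥ w)) * (2 * (q + 1))⁻¹) * (2 * (q + 1)) :=
                mul_le_mul_of_nonneg_right ht2 h2q.le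
            _ = -(g ⬝ᵥ w) := by field_simp
        have hexpand3 : t * (2 * (q + 1)) = 2 * (t * q) + 2 * t := by ring
        linarith
      linarith
    obtain ⟨l, μ, hμnn, hμsupp, hgeq⟩ := farkas_matrix F A g hg
    refine ⟨μ, ?_, ?_, hyl, ?_⟩
    · intro i; simpa using hμnn i
    · -- y = M (x + μ) + r
      have hxmu : x + μ = (R *ᵥ y + c) - Fᵀ *ᵥ l := by
        have : μ = g - Fᵀ *ᵥ l := by rw [hgeq]; abel
        rw [this, hgdef]; abel
      have hMy : M *ᵥ (R *ᵥ y) = y - (G * S⁻¹) *ᵥ d := by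
        rw [Matrix.mulVec_mulVec, hMR, Matrix.sub_mulVec, Matrix.one_mulVec,
          ← Matrix.mulVec_mulVec y G (S⁻¹ * F), ← Matrix.mulVec_mulVec y S⁻¹ F, hFy,
          Matrix.mulVec_mulVec d G S⁻¹]
      have hMft : M *ᵥ (Fᵀ *ᵥ l) = 0 := by
        rw [Matrix.mulVec_mulVec, hMFt, Matrix.zero_mulVec]
      rw [hxmu, Matrix.mulVec_sub, Matrix.mulVec_add, hMy, hMft, hrr]
      abel
    · -- complementary slackness
      apply Finset.sum_eq_zero
      intro i _
      by_cases hi : y i = ℓ i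
      · simp [hi]
      · have : μ i = 0 := hμsupp i (by simp [hAdef, hi])
        simp [this]
  · -- KKT → minimality
    rintro ⟨μ, hμ, hyeq, hyl, hcomp⟩
    have hFy : F *ᵥ y = d := by
      rw [hyeq, Matrix.mulVec_add, Matrix.mulVec_mulVec, hFM, Matrix.zero_mulVec, zero_add,
        hrr, Matrix.mulVec_sub, Matrix.mulVec_mulVec, hFGS, Matrix.one_mulVec,
        Matrix.mulVec_mulVec, hFM, Matrix.zero_mulVec, sub_zero]
    refine ⟨hyl, hFy, ?_⟩
    intro z hzl hFz
    set lam := S⁻¹ *ᵥ d - T *ᵥ (x + μ) + T *ᵥ c with hlam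
    have hgrad : R *ᵥ y + (c - x) = μ + Fᵀ *ᵥ lam := by
      have h1 : R *ᵥ (M *ᵥ (x + μ)) = (x + μ) - (Fᵀ * T) *ᵥ (x + μ) := by
        rw [Matrix.mulVec_mulVec, hRM, Matrix.sub_mulVec, Matrix.one_mulVec]
      have h2 : R *ᵥ r = (Fᵀ * S⁻¹) *ᵥ d - (c - (Fᵀ * T) *ᵥ c) := by
        rw [hrr, Matrix.mulVec_sub, Matrix.mulVec_mulVec, hRGS, Matrix.mulVec_mulVec, hRM,
          Matrix.sub_mulVec, Matrix.one_mulVec]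
      have h3 : Fᵀ *ᵥ lam = (Fᵀ * S⁻¹) *ᵥ d - (Fᵀ * T) *ᵥ (x + μ) + (Fᵀ * T) *ᵥ c := by
        rw [hlam, Matrix.mulVec_add, Matrix.mulVec_sub, Matrix.mulVec_mulVec,
          Matrix.mulVec_mulVec, Matrix.mulVec_mulVec]
      rw [hyeq, Matrix.mulVec_add, h1, h2, h3]
      abel
    have hexp := quad_expand R hRsymm (c - x) y z
    have hgz : (R *ᵥ y + (c - x)) ⬝ᵥ (z - y) = μ ⬝ᵥ (z - ℓ) := by
      rw [hgrad, add_dotProduct]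
      have hF0 : (Fᵀ *ᵥ lam) ⬝ᵥ (z - y) = 0 := by
        rw [Matrix.mulVec_transpose, ← Matrix.dotProduct_mulVec, Matrix.mulVec_sub, hFz, hFy,
          sub_self, dotProduct_zero]
      have hzy : z - y = (z - ℓ) - (y - ℓ) := by abel
      rw [hF0, add_zero, hzy, dotProduct_sub, hcomp, sub_zero]
    have hμz : 0 ≤ μ ⬝ᵥ (z - ℓ) :=
      dot_nonneg' (fun i => by simpa using hμ i) (fun i => by
        have := hzl i; simp only [Pi.sub_apply]; linarith)
    have hquad : 0 ≤ (z - y) ⬝ᵥ (R *ᵥ (z - y)) := hPSD _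
    linarith [hexp, hgz]
end

section
/- (Lemma 2) Let M be an m×m real matrix, r′ ∈ ℝᵐ, p ∈ ℝᵐ, and ℓ ∈ ℝᵐ with ℓ ≤ 0. Define S₁′ = {(x,y) ∈ ℝᵐ×ℝᵐ : x ≥ 0, and there exists μ ≥ 0 with y = M(x + μ) + r′, y ≥ ℓ, μᵀ(y − ℓ) = 0} and C₁′ = {(x,y) : x ≥ 0, y = M x + r′, y ≥ ℓ}. Then for every (x̄, ȳ) ∈ S₁′ there exists x̂ ∈ ℝᵐ such that (x̂, ȳ) ∈ C₁′ and φ(x̂, ȳ) ≤ φ(x̄, ȳ). -/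
open Matrix

/-- (Lemma 2) For every (x̄,ȳ) ∈ S₁′ there exists x̂ with (x̂,ȳ) ∈ C₁′ and
φ(x̂,ȳ) ≤ φ(x̄,ȳ), where φ(x,y) = (x−p)ᵀy and ℓ ≤ 0. -/
theorem stmt_6 {m : ℕ} (M : Matrix (Fin m) (Fin m) ℝ)
    (r' p ℓ : Fin m → ℝ) (hℓ : ℓ ≤ 0)
    (xb yb : Fin m → ℝ)
    (hS : 0 ≤ xb ∧ ∃ μ : Fin m → ℝ, 0 ≤ μ ∧
      yb = M *ᵥ (xb + μ) + r' ∧ ℓ ≤ yb ∧ μ ⬝ᵥ (yb - ℓ) = 0) :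
    ∃ xh : Fin m → ℝ,
      (0 ≤ xh ∧ yb = M *ᵥ xh + r' ∧ ℓ ≤ yb) ∧
      (xh - p) ⬝ᵥ yb ≤ (xb - p) ⬝ᵥ yb := by
  obtain ⟨hx, μ, hμ, hy, hly, hcomp⟩ := hS
  refine ⟨xb + μ, ⟨fun i => add_nonneg (hx i) (hμ i), hy, hly⟩, ?_⟩
  have hμy : μ ⬝ᵥ yb = μ ⬝ᵥ ℓ :=
    sub_eq_zero.mp (by rw [← dotProduct_sub]; exact hcomp)
  have hμℓ : μ ⬝ᵥ ℓ ≤ 0 :=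
    Finset.sum_nonpos fun i _ => mul_nonpos_of_nonneg_of_nonpos (hμ i) (hℓ i)
  have : (xb + μ - p) ⬝ᵥ yb = (xb - p) ⬝ᵥ yb + μ ⬝ᵥ yb := by
    simp [sub_dotProduct, add_dotProduct]; ring
  rw [this, hμy]
  linarith
end

section
/- (Theorem 1, inclusion part) Let M be an m×m real symmetric positive semidefinite matrix, r, p, ℓ ∈ ℝᵐ with ℓ ≤ 0. Define S₁ = {(x,y) ∈ ℝᵐ×ℝᵐ : x ≥ 0, and there exists μ ≥ 0 with y = M(x + μ) + r, y ≥ ℓ, μᵀ(y − ℓ) = 0} and C₁ = {(x,y) : x ≥ 0, y = M x + r, y ≥ ℓ}. Then every global minimizer of φ over C₁ is a global minimizer of φ over S₁; that is, Opt(CVX1) ⊆ Opt(SLP1). -/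
open Matrix

/-- (Theorem 1, inclusion part) Opt(CVX1) ⊆ Opt(SLP1). -/
theorem stmt_7 {m : ℕ} (M : Matrix (Fin m) (Fin m) ℝ) (hM : M.PosSemidef)
    (r p ℓ : Fin m → ℝ) (hℓ : ℓ ≤ 0) :
    let φ : (Fin m → ℝ) × (Fin m → ℝ) → ℝ := fun z => (z.1 - p) ⬝ᵥ z.2
    let S₁ : Set ((Fin m → ℝ) × (Fin m → ℝ)) :=
      {z | 0 ≤ z.1 ∧ ∃ μ : Fin m → ℝ, 0 ≤ μ ∧
        z.2 = M *ᵥ (z.1 + μ) + r ∧ ℓ ≤ z.2 ∧ μ ⬝ᵥ (z.2 - ℓ) = 0}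
    let C₁ : Set ((Fin m → ℝ) × (Fin m → ℝ)) :=
      {z | 0 ≤ z.1 ∧ z.2 = M *ᵥ z.1 + r ∧ ℓ ≤ z.2}
    {z ∈ C₁ | ∀ w ∈ C₁, φ z ≤ φ w} ⊆ {z ∈ S₁ | ∀ w ∈ S₁, φ z ≤ φ w} := by
  intro φ S₁ C₁
  rintro z ⟨⟨hzx, hzy, hzℓ⟩, hmin⟩
  constructor
  · exact ⟨hzx, 0, le_refl 0, by simpa using hzy, hzℓ, by simp⟩
  · rintro w ⟨hwx, μ, hμ, hwy, hwℓ, hdot⟩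
    have hC : ((w.1 + μ, w.2) : (Fin m → ℝ) × (Fin m → ℝ)) ∈ C₁ :=
      ⟨add_nonneg hwx hμ, hwy, hwℓ⟩
    have h1 : φ z ≤ φ (w.1 + μ, w.2) := hmin _ hC
    have hμy : μ ⬝ᵥ w.2 = μ ⬝ᵥ ℓ := by
      have := hdot
      rw [dotProduct_sub] at this
      linarith
    have hμℓ : μ ⬝ᵥ ℓ ≤ 0 := by
      apply Finset.sum_nonpos
      intro i _
      exact mul_nonpos_of_nonneg_of_nonpos (hμ i) (hℓ i)
    have h2 : φ (w.1 + μ, w.2) = φ w + μ ⬝ᵥ w.2 := by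
      simp only [φ]
      rw [show w.1 + μ - p = (w.1 - p) + μ by abel, add_dotProduct]
    have : φ (w.1 + μ, w.2) ≤ φ w := by rw [h2, hμy]; linarith
    linarith
end

section
/- (Lemma 3) Let M be an m×m real matrix, r, p ∈ ℝᵐ, and u ∈ ℝᵐ with u ≥ 0. Define S₂ = {(x,y) ∈ ℝᵐ×ℝᵐ : x ≥ 0, and there exists ν ≥ 0 with y = M(x − ν) + r, y ≤ u, νᵀ(u − y) = 0} and S₂′ = {(x,y) : x ≥ 0, and there exists ν ≥ 0 with y = M(x − ν) + r, y ≤ u, νᵀ(u − y) = 0, νᵀ x = 0}. Then for every (x̄, ȳ) ∈ S₂ there exists x̂ ∈ ℝᵐ such that (x̂, ȳ) ∈ S₂′ and φ(x̂, ȳ) ≤ φ(x̄, ȳ). -/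
open Matrix

/-- (Lemma 3) For every (x̄,ȳ) ∈ S₂ there exists x̂ with (x̂,ȳ) ∈ S₂′ and
φ(x̂,ȳ) ≤ φ(x̄,ȳ), where φ(x,y) = (x−p)ᵀy and u ≥ 0. -/
theorem stmt_9 {m : ℕ} (M : Matrix (Fin m) (Fin m) ℝ)
    (r p u : Fin m → ℝ) (hu : 0 ≤ u)
    (xb yb : Fin m → ℝ)
    (hS : 0 ≤ xb ∧ ∃ ν : Fin m → ℝ, 0 ≤ ν ∧
      yb = M *ᵥ (xb - ν) + r ∧ yb ≤ u ∧ ν ⬝ᵥ (u - yb) = 0) :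
    ∃ xh : Fin m → ℝ,
      (0 ≤ xh ∧ ∃ ν : Fin m → ℝ, 0 ≤ ν ∧
        yb = M *ᵥ (xh - ν) + r ∧ yb ≤ u ∧ ν ⬝ᵥ (u - yb) = 0 ∧ ν ⬝ᵥ xh = 0) ∧
      (xh - p) ⬝ᵥ yb ≤ (xb - p) ⬝ᵥ yb := by
  obtain ⟨hx, ν, hν, hy, hyu, hcomp⟩ := hS
  set s : Fin m → ℝ := fun i => min (xb i) (ν i) with hs
  -- each term of the complementarity sum is zero
  have hterm : ∀ i, ν i * (u i - yb i) = 0 := by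
    have h0 : ∀ i ∈ Finset.univ, (0:ℝ) ≤ ν i * (u i - yb i) := fun i _ =>
      mul_nonneg (hν i) (by linarith [hyu i])
    intro i
    have := (Finset.sum_eq_zero_iff_of_nonneg h0).mp hcomp i (Finset.mem_univ i)
    exact this
  refine ⟨xb - s, ⟨fun i => sub_nonneg.2 (min_le_left (xb i) (ν i)),
    ν - s, fun i => sub_nonneg.2 (min_le_right (xb i) (ν i)),
    by rw [hy]; ring_nf, ?_, ?_, ?_⟩, ?_⟩
  · exact hyu
  · -- (ν - s) ⬝ᵥ (u - yb) = 0
    apply Finset.sum_eq_zero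
    intro i _
    rcases le_or_gt (ν i) 0 with h | h
    · have hν0 : ν i = 0 := le_antisymm h (hν i)
      have hs0 : s i = 0 := by simp [hs, hν0, min_eq_right (hx i)]; exact hx i
      simp [Pi.sub_apply, hν0, hs0]
    · have : u i - yb i = 0 := by
        have := hterm i; nlinarith
      simp [Pi.sub_apply, this]
  · -- (ν - s) ⬝ᵥ (xb - s) = 0
    apply Finset.sum_eq_zero
    intro i _
    rcases le_total (xb i) (ν i) with h | h
    · simp [hs, min_eq_left h]
    · simp [hs, min_eq_right h]
  · -- objective decreases
    have key : ∀ i ∈ Finset.univ, ((xb - s - p) i) * yb i ≤ ((xb - p) i) * yb i := by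
      intro i _
      rcases eq_or_lt_of_le (le_min (hx i) (hν i) : (0:ℝ) ≤ s i) with h | h
      · have : s i = 0 := h.symm
        simp only [Pi.sub_apply, this]; ring_nf; exact le_refl _
      · -- s i > 0 ⟹ ν i > 0 ⟹ yb i = u i ≥ 0
        have hνpos : 0 < ν i := lt_of_lt_of_le h (min_le_right _ _)
        have hyi : yb i = u i := by
          have := hterm i; nlinarith
        have hsnn : 0 ≤ s i := le_of_lt h
        have : 0 ≤ yb i := hyi ▸ hu i
        simp only [Pi.sub_apply]
        nlinarith
    calc (xb - s - p) ⬝ᵥ yb = ∑ i, ((xb - s - p) i) * yb i := rfl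
      _ ≤ ∑ i, ((xb - p) i) * yb i := Finset.sum_le_sum key
      _ = (xb - p) ⬝ᵥ yb := rfl
end

section
/- (Lemma 6) Let M be an m×m real symmetric positive semidefinite matrix whose off-diagonal entries are all nonpositive (an M-matrix), and let r, u ∈ ℝᵐ with u > r entrywise. Define S₂′ = {(x,y) ∈ ℝᵐ×ℝᵐ : x ≥ 0, and there exists ν ≥ 0 with y = M(x − ν) + r, y ≤ u, νᵀ(u − y) = 0, νᵀ x = 0} and C₂ = {(x,y) : x ≥ 0, y = M x + r, y ≤ u}. Then S₂′ = C₂; equivalently, the defining system of S₂′ is satisfiable only with ν = 0. -/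
open Matrix

/-- (Lemma 6) If M is an M-matrix (symmetric PSD with nonpositive off-diagonal entries)
and u > r entrywise, then S₂′ = C₂. -/
theorem stmt_10 {m : ℕ} (M : Matrix (Fin m) (Fin m) ℝ) (hM : M.PosSemidef)
    (hZ : ∀ i j, i ≠ j → M i j ≤ 0)
    (r u : Fin m → ℝ) (hur : ∀ i, r i < u i) :
    {z : (Fin m → ℝ) × (Fin m → ℝ) | 0 ≤ z.1 ∧ ∃ ν : Fin m → ℝ, 0 ≤ ν ∧
        z.2 = M *ᵥ (z.1 - ν) + r ∧ z.2 ≤ u ∧ ν ⬝ᵥ (u - z.2) = 0 ∧ ν ⬝ᵥ z.1 = 0}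
      = {z : (Fin m → ℝ) × (Fin m → ℝ) | 0 ≤ z.1 ∧ z.2 = M *ᵥ z.1 + r ∧ z.2 ≤ u} := by
  ext ⟨x, y⟩
  simp only [Set.mem_setOf_eq]
  constructor
  · rintro ⟨hx, ν, hν, hy, hyu, h1, h2⟩
    -- each term ν i * x i = 0
    have hterm : ∀ i, ν i * x i = 0 := by
      intro i
      have := (Finset.sum_eq_zero_iff_of_nonneg (fun j _ =>
        mul_nonneg (hν j) (hx j))).mp h2 i (Finset.mem_univ i)
      exact this
    -- ν ⬝ᵥ (M *ᵥ x) ≤ 0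
    have hMx : ν ⬝ᵥ (M *ᵥ x) ≤ 0 := by
      have : ν ⬝ᵥ (M *ᵥ x) = ∑ i, ∑ j, ν i * (M i j * x j) := by
        simp [dotProduct, mulVec, Finset.mul_sum]
      rw [this]
      apply Finset.sum_nonpos
      intro i _
      apply Finset.sum_nonpos
      intro j _
      rcases eq_or_ne i j with rfl | hij
      · have : ν i * (M i i * x i) = M i i * (ν i * x i) := by ring
        rw [this, hterm i, mul_zero]
      · have : ν i * (M i j * x j) = M i j * (ν i * x j) := by ring
        rw [this]
        exact mul_nonpos_of_nonpos_of_nonneg (hZ i j hij)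
          (mul_nonneg (hν i) (hx j))
    -- PSD: 0 ≤ ν ⬝ᵥ (M *ᵥ ν)
    have hpsd : 0 ≤ ν ⬝ᵥ (M *ᵥ ν) := by simpa using hM.dotProduct_mulVec_nonneg ν
    -- key identity
    have hkey : ν ⬝ᵥ (M *ᵥ ν) + ν ⬝ᵥ (u - r) = ν ⬝ᵥ (M *ᵥ x) := by
      have h1' := h1
      rw [dotProduct_sub] at h1' ⊢
      rw [hy, dotProduct_add, mulVec_sub, dotProduct_sub] at h1'
      linarith
    have hur' : 0 ≤ ν ⬝ᵥ (u - r) :=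
      Finset.sum_nonneg fun i _ =>
        mul_nonneg (hν i) (sub_nonneg.mpr (hur i).le)
    have hur0 : ν ⬝ᵥ (u - r) = 0 := by linarith
    have hν0 : ν = 0 := by
      funext i
      have hi := (Finset.sum_eq_zero_iff_of_nonneg (fun j _ =>
        mul_nonneg (hν j) (sub_nonneg.mpr (hur j).le))).mp hur0 i (Finset.mem_univ i)
      have : u i - r i > 0 := sub_pos.mpr (hur i)
      have := mul_eq_zero.mp hi
      rcases this with h | h
      · exact h
      · simp [Pi.sub_apply] at h; linarith [hur i]
    refine ⟨hx, ?_, hyu⟩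
    rw [hy, hν0, sub_zero]
  · rintro ⟨hx, hy, hyu⟩
    exact ⟨hx, 0, le_refl 0, by rw [hy, sub_zero], hyu, by simp, by simp⟩
end

section
/- (Theorem 2, inclusion part) Let M be an m×m real symmetric positive semidefinite matrix whose off-diagonal entries are all nonpositive (an M-matrix), and let r, p, u ∈ ℝᵐ with u ≥ 0 and u > r entrywise. Define S₂ = {(x,y) ∈ ℝᵐ×ℝᵐ : x ≥ 0, and there exists ν ≥ 0 with y = M(x − ν) + r, y ≤ u, νᵀ(u − y) = 0} and C₂ = {(x,y) : x ≥ 0, y = M x + r, y ≤ u}. Then every global minimizer of φ over C₂ is a global minimizer of φ over S₂; that is, Opt(CVX2) ⊆ Opt(SLP2). -/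
open Matrix

/-- (Theorem 2, inclusion part) Opt(CVX2) ⊆ Opt(SLP2). -/
theorem stmt_11 {m : ℕ} (M : Matrix (Fin m) (Fin m) ℝ) (hM : M.PosSemidef)
    (hZ : ∀ i j, i ≠ j → M i j ≤ 0)
    (r p u : Fin m → ℝ) (hu : 0 ≤ u) (hur : ∀ i, r i < u i) :
    let φ : (Fin m → ℝ) × (Fin m → ℝ) → ℝ := fun z => (z.1 - p) ⬝ᵥ z.2
    let S₂ : Set ((Fin m → ℝ) × (Fin m → ℝ)) :=
      {z | 0 ≤ z.1 ∧ ∃ ν : Fin m → ℝ, 0 ≤ ν ∧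
        z.2 = M *ᵥ (z.1 - ν) + r ∧ z.2 ≤ u ∧ ν ⬝ᵥ (u - z.2) = 0}
    let C₂ : Set ((Fin m → ℝ) × (Fin m → ℝ)) :=
      {z | 0 ≤ z.1 ∧ z.2 = M *ᵥ z.1 + r ∧ z.2 ≤ u}
    {z ∈ C₂ | ∀ w ∈ C₂, φ z ≤ φ w} ⊆ {z ∈ S₂ | ∀ w ∈ S₂, φ z ≤ φ w} := by
  intro φ S₂ C₂
  rintro z ⟨⟨hz1, hz2, hz3⟩, hzopt⟩
  refine ⟨⟨hz1, 0, le_refl _, by simpa using hz2, hz3, by simp⟩, ?_⟩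
  rintro w ⟨hw1, ν, hν0, hwy, hwu, hcomp⟩
  set s : Fin m → ℝ := w.1 - ν with hs_def
  have hyMs : w.2 = M *ᵥ s + r := hwy
  -- pointwise complementarity
  have hcomp' : ∑ i, ν i * (u i - w.2 i) = 0 := by
    simpa [dotProduct] using hcomp
  have hcompi : ∀ i, ν i * (u i - w.2 i) = 0 := by
    intro i
    have hnn : ∀ j ∈ Finset.univ, (0:ℝ) ≤ ν j * (u j - w.2 j) := fun j _ =>
      mul_nonneg (hν0 j) (sub_nonneg.2 (hwu j))
    exact (Finset.sum_eq_zero_iff_of_nonneg hnn).1 hcomp' i (Finset.mem_univ i)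
  have hyu : ∀ i, 0 < ν i → w.2 i = u i := by
    intro i hi
    have h := hcompi i
    have : u i - w.2 i = 0 := by
      rcases mul_eq_zero.1 h with h' | h'
      · exact absurd h' (ne_of_gt hi)
      · exact h'
    linarith
  -- key: s ≥ 0
  have hs0 : ∀ i, 0 ≤ s i := by
    by_contra hneg
    push_neg at hneg
    obtain ⟨i0, hi0⟩ := hneg
    set t : Fin m → ℝ := fun i => max (-(s i)) 0 with ht_def
    set sp : Fin m → ℝ := fun i => max (s i) 0 with hsp_def
    have ht0 : ∀ i, 0 ≤ t i := fun i => le_max_right _ _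
    have hsp0 : ∀ i, 0 ≤ sp i := fun i => le_max_right _ _
    have hsplit : s = sp - t := by
      funext i
      simp only [Pi.sub_apply, hsp_def, ht_def]
      rcases le_total (s i) 0 with h | h
      · rw [max_eq_right h, max_eq_left (by linarith)]; ring
      · rw [max_eq_left h, max_eq_right (by linarith)]; ring
    have htsp : ∀ i, t i * sp i = 0 := by
      intro i
      rcases le_total (s i) 0 with h | h
      · simp [ht_def, hsp_def, max_eq_right h]
      · simp [ht_def, hsp_def, max_eq_right (neg_nonpos.2 h)]
    -- if t i > 0 then s i < 0, ν i > 0, w.2 i = u i, (M *ᵥ s) i = u i - r i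
    have hMst : ∀ i, 0 < t i → (M *ᵥ s) i = u i - r i := by
      intro i hti
      have hsi : s i < 0 := by
        by_contra h
        push_neg at h
        have : t i = 0 := by simp [ht_def, max_eq_right (neg_nonpos.2 h)]
        linarith
      have hνi : 0 < ν i := by
        have hx := hw1 i
        simp only [Pi.zero_apply] at hx
        simp only [hs_def, Pi.sub_apply] at hsi
        linarith
      have hwi : w.2 i = u i := hyu i hνi
      have : w.2 i = (M *ᵥ s) i + r i := by rw [hyMs]; simp
      linarith
    set A : ℝ := ∑ i, t i * (M *ᵥ s) i with hA_def
    have hApos : 0 < A := by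
      apply Finset.sum_pos'
      · intro i _
        rcases eq_or_lt_of_le (ht0 i) with h | h
        · rw [← h, zero_mul]
        · rw [hMst i h]
          exact le_of_lt (mul_pos h (by linarith [hur i]))
      · refine ⟨i0, Finset.mem_univ _, ?_⟩
        have hti0 : 0 < t i0 := by
          simp only [ht_def]
          rw [max_eq_left (by linarith)]
          linarith
        rw [hMst i0 hti0]
        exact mul_pos hti0 (by linarith [hur i0])
    have hAle : A ≤ 0 := by
      have hMs : M *ᵥ s = M *ᵥ sp - M *ᵥ t := by rw [hsplit, Matrix.mulVec_sub]
      have h1 : ∑ i, t i * (M *ᵥ sp) i ≤ 0 := by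
        apply Finset.sum_nonpos
        intro i _
        simp only [Matrix.mulVec, dotProduct]
        rw [Finset.mul_sum]
        apply Finset.sum_nonpos
        intro j _
        rcases eq_or_ne i j with rfl | hij
        · have heq : t i * (M i i * sp i) = M i i * (t i * sp i) := by ring
          rw [heq, htsp i, mul_zero]
        · have hMij := hZ i j hij
          have := mul_nonneg (ht0 i) (hsp0 j)
          nlinarith
      have h2 : 0 ≤ ∑ i, t i * (M *ᵥ t) i := by
        have := hM.dotProduct_mulVec_nonneg t
        simpa [dotProduct] using this
      calc A = ∑ i, t i * (M *ᵥ sp) i - ∑ i, t i * (M *ᵥ t) i := by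
              rw [hA_def, ← Finset.sum_sub_distrib]
              congr 1; funext i
              rw [hMs]; simp [Pi.sub_apply]; ring
        _ ≤ 0 := by linarith
    linarith
  -- (s, w.2) ∈ C₂
  have hcC : (s, w.2) ∈ C₂ := by
    refine ⟨fun i => hs0 i, ?_, hwu⟩
    simpa using hyMs
  have hle := hzopt (s, w.2) hcC
  -- φ (s, w.2) = φ w - ν ⬝ᵥ w.2  and  ν ⬝ᵥ w.2 = ν ⬝ᵥ u ≥ 0
  have hνu : ν ⬝ᵥ w.2 = ν ⬝ᵥ u := by
    have : ν ⬝ᵥ u - ν ⬝ᵥ w.2 = 0 := by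
      rw [← dotProduct_sub]; exact hcomp
    linarith
  have hνu0 : 0 ≤ ν ⬝ᵥ u := by
    apply Finset.sum_nonneg
    intro i _
    exact mul_nonneg (hν0 i) (hu i)
  have hφc : φ (s, w.2) = φ w - ν ⬝ᵥ w.2 := by
    simp only [φ, hs_def]
    have : (w.1 - ν - p) = (w.1 - p) - ν := by ring
    rw [this, sub_dotProduct]
  rw [hφc, hνu] at hle
  linarith
end

section
/- (Theorem 3) Let R be an m×m real positive definite diagonal matrix and let F be an n×m real matrix, all of whose entries are nonpositive, whose rows are pairwise orthogonal (F_{i•}(F_{j•})ᵀ = 0 for all i ≠ j) and nonzero. Then the matrix M = R⁻¹ − R⁻¹ Fᵀ (F R⁻¹ Fᵀ)⁻¹ F R⁻¹ is an M-matrix; in particular, all off-diagonal entries of M are nonpositive (and M is positive semidefinite). -/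
open Matrix

/-- (Theorem 3) If R is positive definite diagonal and F is nonpositive with pairwise
orthogonal nonzero rows, then M = R⁻¹ − R⁻¹Fᵀ(FR⁻¹Fᵀ)⁻¹FR⁻¹ is an M-matrix:
positive semidefinite with nonpositive off-diagonal entries. -/
theorem stmt_13 {m n : ℕ} (ρ : Fin m → ℝ) (hρ : ∀ i, 0 < ρ i)
    (R : Matrix (Fin m) (Fin m) ℝ) (hR : R = Matrix.diagonal ρ)
    (F : Matrix (Fin n) (Fin m) ℝ) (hFnp : ∀ i j, F i j ≤ 0)
    (horth : ∀ i j, i ≠ j → F i ⬝ᵥ F j = 0)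
    (hrow : ∀ i, F i ≠ 0) :
    let M := R⁻¹ - R⁻¹ * Fᵀ * (F * R⁻¹ * Fᵀ)⁻¹ * (F * R⁻¹)
    M.PosSemidef ∧ ∀ i j, i ≠ j → M i j ≤ 0 := by
  intro M
  have hMdef : M = R⁻¹ - R⁻¹ * Fᵀ * (F * R⁻¹ * Fᵀ)⁻¹ * (F * R⁻¹) := rfl
  set d : Fin m → ℝ := fun i => (ρ i)⁻¹ with hd
  have hdpos : ∀ i, 0 < d i := fun i => inv_pos.mpr (hρ i)
  have hρd : Matrix.diagonal ρ * Matrix.diagonal d = 1 := by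
    rw [Matrix.diagonal_mul_diagonal]
    convert Matrix.diagonal_one
    exact mul_inv_cancel₀ (hρ _).ne'
  have hdρ : Matrix.diagonal d * Matrix.diagonal ρ = 1 := by
    rw [Matrix.diagonal_mul_diagonal]
    convert Matrix.diagonal_one
    exact inv_mul_cancel₀ (hρ _).ne'
  have hRinv : R⁻¹ = Matrix.diagonal d := by
    rw [hR]; exact Matrix.inv_eq_right_inv hρd
  have hprod : ∀ a b : ℝ, a ≤ 0 → b ≤ 0 → 0 ≤ a * b := by intro a b ha hb; nlinarith
  have hzero : ∀ i j, i ≠ j → ∀ k, F i k * F j k = 0 := by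
    intro i j hij k
    have h0 : ∀ l ∈ Finset.univ, (0:ℝ) ≤ F i l * F j l := fun l _ =>
      hprod _ _ (hFnp i l) (hFnp j l)
    have := horth i j hij
    rw [dotProduct] at this
    exact (Finset.sum_eq_zero_iff_of_nonneg h0).mp this k (Finset.mem_univ k)
  set g : Fin n → ℝ := fun i => ∑ k, F i k * d k * F i k with hg
  have hgpos : ∀ i, 0 < g i := by
    intro i
    obtain ⟨k, hk⟩ := Function.ne_iff.mp (hrow i)
    have hk' : F i k ≠ 0 := hk
    have hsq : 0 < F i k * F i k := mul_self_pos.mpr hk'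
    apply Finset.sum_pos' (fun l _ => by nlinarith [hdpos l, mul_self_nonneg (F i l)])
      ⟨k, Finset.mem_univ k, by nlinarith [hdpos k]⟩
  set e : Fin n → ℝ := fun i => (g i)⁻¹ with he
  have hepos : ∀ i, 0 < e i := fun i => inv_pos.mpr (hgpos i)
  have hGd : F * Matrix.diagonal d * Fᵀ = Matrix.diagonal g := by
    ext i j
    rcases eq_or_ne i j with rfl | hij
    · simp only [Matrix.mul_apply, Matrix.diagonal_apply, Matrix.transpose_apply,
        ite_mul, mul_ite, zero_mul, mul_zero, Finset.sum_ite_eq, Finset.sum_ite_eq',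
        Finset.mem_univ, if_true, Matrix.diagonal_apply_eq]
      rfl
    · rw [Matrix.diagonal_apply_ne _ hij]
      simp only [Matrix.mul_apply, Matrix.diagonal_apply, Matrix.transpose_apply,
        ite_mul, mul_ite, zero_mul, mul_zero, Finset.sum_ite_eq, Finset.sum_ite_eq',
        Finset.mem_univ, if_true]
      apply Finset.sum_eq_zero
      intro k _
      have := hzero i j hij k
      nlinarith [hdpos k]
  have hge : Matrix.diagonal g * Matrix.diagonal e = 1 := by
    rw [Matrix.diagonal_mul_diagonal]
    convert Matrix.diagonal_one
    exact mul_inv_cancel₀ (hgpos _).ne'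
  have hGinv : (F * R⁻¹ * Fᵀ)⁻¹ = Matrix.diagonal e := by
    rw [hRinv, hGd]; exact Matrix.inv_eq_right_inv hge
  set D := Matrix.diagonal d with hD
  set P := Fᵀ * Matrix.diagonal e * F with hP
  have hMdef2 : M = D - D * P * D := by
    rw [hMdef, hGinv, hRinv, hP, hD]
    simp only [Matrix.mul_assoc]
  have hege : Matrix.diagonal e * Matrix.diagonal g * Matrix.diagonal e = Matrix.diagonal e := by
    rw [Matrix.diagonal_mul_diagonal, Matrix.diagonal_mul_diagonal]
    congr 1
    funext i
    rw [he]
    field_simp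
  have hPDP : P * D * P = P := by
    rw [hP, hD]
    have h1 : Fᵀ * Matrix.diagonal e * F * Matrix.diagonal d * (Fᵀ * Matrix.diagonal e * F)
        = Fᵀ * ((Matrix.diagonal e * (F * Matrix.diagonal d * Fᵀ) * Matrix.diagonal e) * F) := by
      simp only [Matrix.mul_assoc]
    rw [h1, hGd, hege, ← Matrix.mul_assoc]
  have hPsym : Pᵀ = P := by
    rw [hP]
    simp [Matrix.transpose_mul, Matrix.diagonal_transpose, Matrix.mul_assoc]
  have hMsym : Mᵀ = M := by
    rw [hMdef2, Matrix.transpose_sub, Matrix.transpose_mul, Matrix.transpose_mul, hPsym, hD,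
      Matrix.diagonal_transpose]
    simp only [Matrix.mul_assoc]
  have hDR : D * R = 1 := by rw [hD, hR]; exact hdρ
  have hMRM : M * R * M = M := by
    rw [hMdef2]
    have hDRD : D * R * D = D := by rw [hDR, one_mul]
    have h2 : D * R * (D * P * D) = D * P * D := by rw [hDR, one_mul]
    have h3 : D * P * D * R * D = D * P * D := by
      have : D * P * D * R * D = D * P * (D * R) * D := by noncomm_ring
      rw [this, hDR, mul_one]
    have h4 : D * P * D * R * (D * P * D) = D * P * D := by
      have : D * P * D * R * (D * P * D) = D * P * (D * R) * D * P * D := by noncomm_ring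
      rw [this, hDR, mul_one]
      have : D * P * D * P * D = D * (P * D * P) * D := by noncomm_ring
      rw [this, hPDP]
    rw [sub_mul, sub_mul, mul_sub, mul_sub, hDRD, h2, h3, h4]
    abel
  constructor
  · have hRpsd : R.PosSemidef := by
      rw [hR]
      exact Matrix.posSemidef_diagonal_iff.mpr fun i => (hρ i).le
    have hps := hRpsd.mul_mul_conjTranspose_same M
    have hconj : Mᴴ = M := by
      ext i j
      simpa using (congrFun (congrFun hMsym j) i).symm
    rwa [hconj, hMRM] at hps
  · intro i j hij
    rw [hMdef2, hD, hP, Matrix.sub_apply, Matrix.diagonal_apply_ne _ hij]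
    simp only [Matrix.mul_apply, Matrix.diagonal_apply, Matrix.transpose_apply,
      ite_mul, mul_ite, zero_mul, mul_zero, Finset.sum_ite_eq, Finset.sum_ite_eq',
      Finset.mem_univ, if_true, zero_sub, neg_nonpos]
    apply mul_nonneg (mul_nonneg (hdpos i).le ?_) (hdpos j).le
    apply Finset.sum_nonneg
    intro k _
    have h4 : 0 ≤ F k i * F k j := hprod _ _ (hFnp k i) (hFnp k j)
    nlinarith [hepos k]
end

section
/- (Theorem 4, inclusion part) Let M be an m×m real symmetric positive semidefinite matrix whose off-diagonal entries are all nonpositive (an M-matrix), and let r, p, ℓ, u ∈ ℝᵐ with ℓ ≤ 0, u ≥ 0, and u > r entrywise. Define S = {(x,y) ∈ ℝᵐ×ℝᵐ : x ≥ 0, and there exist μ ≥ 0 and ν ≥ 0 with y = M(x + μ − ν) + r, ℓ ≤ y ≤ u, μᵀ(y − ℓ) = 0, νᵀ(u − y) = 0} and C = {(x,y) : x ≥ 0, y = M x + r, ℓ ≤ y ≤ u}. Then every global minimizer of φ over C is a global minimizer of φ over S; that is, Opt(CVX) ⊆ Opt(SLP). -/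
open Matrix

/-- Pointwise complementarity from aggregated complementarity. -/
lemma ptwise_comp {m : ℕ} {a b : Fin m → ℝ} (ha : 0 ≤ a) (hb : 0 ≤ b)
    (h : a ⬝ᵥ b = 0) : ∀ i, a i * b i = 0 := by
  have := (Finset.sum_eq_zero_iff_of_nonneg
    (fun i _ => mul_nonneg (ha i) (hb i))).mp h
  exact fun i => this i (Finset.mem_univ i)

/-- Key lemma: for a PSD Z-matrix, a point with `y = M t + r`, `y ≤ u`, `r < u`
and `y i = u i` whenever `t i < 0`, must have `t ≥ 0`. -/
lemma key_nonneg {m : ℕ} (M : Matrix (Fin m) (Fin m) ℝ) (hM : M.PosSemidef)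
    (hZ : ∀ i j, i ≠ j → M i j ≤ 0) (t r u y : Fin m → ℝ)
    (hy : y = M *ᵥ t + r) (hur : ∀ i, r i < u i)
    (hneg : ∀ i, t i < 0 → y i = u i) : 0 ≤ t := by
  by_contra hcon
  rw [Pi.le_def] at hcon
  push_neg at hcon
  obtain ⟨i0, hi0⟩ := hcon
  have hi0' : t i0 < 0 := by simpa using hi0
  classical
  set v : Fin m → ℝ := fun i => if t i < 0 then -t i else 0 with hv
  have hvnn : ∀ i, 0 ≤ v i := by
    intro i; simp only [hv]; split
    · linarith [show t i < 0 from by assumption]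
    · exact le_refl 0
  have htv : ∀ j, 0 ≤ t j + v j := by
    intro j; simp only [hv]; split
    · linarith
    · next h => push_neg at h; linarith
  have htvz : ∀ j, t j < 0 → t j + v j = 0 := by
    intro j hj; simp only [hv, if_pos hj]; ring
  -- h1 : 0 ≤ vᵀ M v
  have h1 : 0 ≤ v ⬝ᵥ (M *ᵥ v) := by
    have := hM.dotProduct_mulVec_nonneg v
    simpa using this
  -- h2 : vᵀ M (t+v) ≤ 0
  have h2 : v ⬝ᵥ (M *ᵥ (t + v)) ≤ 0 := by
    apply Finset.sum_nonpos
    intro i _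
    by_cases hi : t i < 0
    · have hvle : (M *ᵥ (t + v)) i ≤ 0 := by
        rw [show (M *ᵥ (t + v)) i = ∑ j, M i j * (t + v) j from rfl]
        apply Finset.sum_nonpos
        intro j _
        by_cases hij : j = i
        · subst hij
          rw [show (t + v) j = 0 from htvz j hi]; ring_nf; simp
        · exact mul_nonpos_of_nonpos_of_nonneg (hZ i j (Ne.symm hij)) (htv j)
      exact mul_nonpos_of_nonneg_of_nonpos (hvnn i) hvle
    · simp only [hv, if_neg hi]; simp
  -- h3 : 0 < vᵀ M t
  have hterm : ∀ i, 0 ≤ v i * (M *ᵥ t) i := by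
    intro i
    by_cases hi : t i < 0
    · have hyi : (M *ᵥ t) i = u i - r i := by
        have := congrFun hy i
        simp only [Pi.add_apply] at this
        rw [hneg i hi] at this
        linarith
      apply mul_nonneg (hvnn i)
      rw [hyi]; linarith [hur i]
    · simp only [hv, if_neg hi]; simp
  have hpos : 0 < v i0 * (M *ᵥ t) i0 := by
    have hyi : (M *ᵥ t) i0 = u i0 - r i0 := by
      have := congrFun hy i0
      simp only [Pi.add_apply] at this
      rw [hneg i0 hi0'] at this
      linarith
    apply mul_pos
    · simp only [hv, if_pos hi0']; linarith
    · rw [hyi]; linarith [hur i0]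
  have h3 : 0 < v ⬝ᵥ (M *ᵥ t) := by
    have hle : v i0 * (M *ᵥ t) i0 ≤ v ⬝ᵥ (M *ᵥ t) :=
      Finset.single_le_sum (fun i _ => hterm i) (Finset.mem_univ i0)
    linarith
  -- combine
  have hsplit : v ⬝ᵥ (M *ᵥ (t + v)) = v ⬝ᵥ (M *ᵥ t) + v ⬝ᵥ (M *ᵥ v) := by
    rw [mulVec_add, dotProduct_add]
  linarith [hsplit ▸ h2]

/-- (Theorem 4, inclusion part) Opt(CVX) ⊆ Opt(SLP). -/
theorem stmt_14 {m : ℕ} (M : Matrix (Fin m) (Fin m) ℝ) (hM : M.PosSemidef)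
    (hZ : ∀ i j, i ≠ j → M i j ≤ 0)
    (r p ℓ u : Fin m → ℝ) (hℓ : ℓ ≤ 0) (hu : 0 ≤ u) (hur : ∀ i, r i < u i) :
    let φ : (Fin m → ℝ) × (Fin m → ℝ) → ℝ := fun z => (z.1 - p) ⬝ᵥ z.2
    let S : Set ((Fin m → ℝ) × (Fin m → ℝ)) :=
      {z | 0 ≤ z.1 ∧ ∃ μ ν : Fin m → ℝ, 0 ≤ μ ∧ 0 ≤ ν ∧
        z.2 = M *ᵥ (z.1 + μ - ν) + r ∧ ℓ ≤ z.2 ∧ z.2 ≤ u ∧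
        μ ⬝ᵥ (z.2 - ℓ) = 0 ∧ ν ⬝ᵥ (u - z.2) = 0}
    let C : Set ((Fin m → ℝ) × (Fin m → ℝ)) :=
      {z | 0 ≤ z.1 ∧ z.2 = M *ᵥ z.1 + r ∧ ℓ ≤ z.2 ∧ z.2 ≤ u}
    {z ∈ C | ∀ w ∈ C, φ z ≤ φ w} ⊆ {z ∈ S | ∀ w ∈ S, φ z ≤ φ w} := by
  intro φ S C z hz
  obtain ⟨⟨hzx, hzy, hzl, hzu⟩, hmin⟩ := hz
  constructor
  · -- z ∈ S with μ = ν = 0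
    refine ⟨hzx, 0, 0, le_refl _, le_refl _, ?_, hzl, hzu, by simp, by simp⟩
    simpa using hzy
  · intro w hw
    obtain ⟨hwx, μ, ν, hμ, hν, hwy, hyl, hyu, hcμ, hcν⟩ := hw
    set t : Fin m → ℝ := w.1 + μ - ν with ht
    -- pointwise complementarity for ν
    have hcνpt : ∀ i, ν i * (u i - w.2 i) = 0 :=
      ptwise_comp hν (fun i => by have := hyu i; simpa using sub_nonneg.mpr this) hcν
    have hcμpt : ∀ i, μ i * (w.2 i - ℓ i) = 0 :=
      ptwise_comp hμ (fun i => by have := hyl i; simpa using sub_nonneg.mpr this) hcμ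
    -- t ≥ 0
    have htnn : 0 ≤ t := by
      apply key_nonneg M hM hZ t r u w.2 hwy hur
      intro i hti
      have hνi : 0 < ν i := by
        have h1 := hwx i; have h2 := hμ i
        simp only [ht, Pi.sub_apply, Pi.add_apply] at hti
        simp only [Pi.zero_apply] at h1 h2 ⊢
        linarith
      have := hcνpt i
      rcases mul_eq_zero.mp this with h | h
      · exact absurd h (ne_of_gt hνi)
      · linarith [sub_eq_zero.mp h]
    -- (t, w.2) ∈ C
    have htC : (t, w.2) ∈ C := ⟨htnn, hwy, hyl, hyu⟩
    have h1 : φ z ≤ φ (t, w.2) := hmin (t, w.2) htC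
    have h2 : φ (t, w.2) ≤ φ w := by
      show (t - p) ⬝ᵥ w.2 ≤ (w.1 - p) ⬝ᵥ w.2
      have hexp : (t - p) ⬝ᵥ w.2 =
          (w.1 - p) ⬝ᵥ w.2 + (μ ⬝ᵥ w.2 - ν ⬝ᵥ w.2) := by
        have : t - p = (w.1 - p) + μ - ν := by
          simp only [ht]; funext i; simp; ring
        rw [this, sub_dotProduct, add_dotProduct]; ring
      have hμy : μ ⬝ᵥ w.2 = μ ⬝ᵥ ℓ := by
        have : μ ⬝ᵥ w.2 - μ ⬝ᵥ ℓ = 0 := by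
          rw [← dotProduct_sub]; exact hcμ
        linarith
      have hνy : ν ⬝ᵥ w.2 = ν ⬝ᵥ u := by
        have : ν ⬝ᵥ u - ν ⬝ᵥ w.2 = 0 := by
          rw [← dotProduct_sub]; exact hcν
        linarith
      have hμℓ : μ ⬝ᵥ ℓ ≤ 0 :=
        Finset.sum_nonpos fun i _ =>
          mul_nonpos_of_nonneg_of_nonpos (hμ i) (hℓ i)
      have hνu : 0 ≤ ν ⬝ᵥ u :=
        Finset.sum_nonneg fun i _ => mul_nonneg (hν i) (hu i)
      rw [hexp, hμy, hνy]
      linarith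
    exact le_trans h1 h2
end

section
/- (Market interpretation of the condition u > r) Let n, K ≥ 1 and m = nK, with coordinates indexed by pairs (i,k) ∈ {1,…,n}×{1,…,K}. Let q ∈ ℝᵐ have strictly positive entries and Q = diag(q). Let s, h⁰, ubar_h ∈ ℝᵐ, let E be the n×m matrix with (Ey)ᵢ = −Σ_{k=1}^{K} y_{i,k} (i.e., E = −Iₙ ⊗ 1_Kᵀ), let h_tot ∈ ℝⁿ satisfy (h_tot)ᵢ = Σ_{k=1}^{K} h⁰_{i,k} (Assumption 1), and set c = Q(h⁰ − s), dᵢ = (h_tot)ᵢ − Σ_{k=1}^{K} s_{i,k}, u = s − ubar_h. Define M = Q⁻¹ − Q⁻¹ Eᵀ (E Q⁻¹ Eᵀ)⁻¹ E Q⁻¹ and r = Q⁻¹ Eᵀ (E Q⁻¹ Eᵀ)⁻¹ d − M c. Then r = s − h⁰, and consequently u > r entrywise if and only if h⁰ > ubar_h entrywise. -/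
open Matrix

/-- (Market interpretation of the condition u > r) With the market data of the paper,
r = s − h⁰, and consequently u > r entrywise iff h⁰ > ubar_h entrywise. -/
theorem stmt_15 {n K : ℕ} (hn : 1 ≤ n) (hK : 1 ≤ K)
    (q : Fin n × Fin K → ℝ) (hq : ∀ ik, 0 < q ik)
    (s h0 hlow : Fin n × Fin K → ℝ)
    (htot : Fin n → ℝ) (hA : ∀ i, htot i = ∑ k : Fin K, h0 (i, k))
    (E : Matrix (Fin n) (Fin n × Fin K) ℝ)
    (hE : E = Matrix.of fun i jk => if jk.1 = i then (-1 : ℝ) else 0)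
    (Q : Matrix (Fin n × Fin K) (Fin n × Fin K) ℝ)
    (hQ : Q = Matrix.diagonal q)
    (c : Fin n × Fin K → ℝ) (hc : c = Q *ᵥ (h0 - s))
    (d : Fin n → ℝ) (hd : ∀ i, d i = htot i - ∑ k : Fin K, s (i, k))
    (u : Fin n × Fin K → ℝ) (hu : u = s - hlow)
    (M : Matrix (Fin n × Fin K) (Fin n × Fin K) ℝ)
    (hM : M = Q⁻¹ - Q⁻¹ * Eᵀ * (E * Q⁻¹ * Eᵀ)⁻¹ * (E * Q⁻¹))
    (r : Fin n × Fin K → ℝ)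
    (hr : r = (Q⁻¹ * Eᵀ * (E * Q⁻¹ * Eᵀ)⁻¹) *ᵥ d - M *ᵥ c) :
    r = s - h0 ∧ ((∀ ik, r ik < u ik) ↔ ∀ ik, hlow ik < h0 ik) := by
  have hdet : IsUnit Q.det := by
    rw [hQ, Matrix.det_diagonal]
    exact (Finset.prod_pos (fun i _ => hq i)).ne'.isUnit
  -- Q⁻¹ *ᵥ c = h0 - s
  have hQc : Q⁻¹ *ᵥ c = h0 - s := by
    rw [hc, Matrix.mulVec_mulVec, Matrix.nonsing_inv_mul Q hdet, Matrix.one_mulVec]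
  -- E *ᵥ (h0 - s) = -d
  have hEc : E *ᵥ (h0 - s) = -d := by
    funext i
    simp only [hE, Matrix.mulVec, dotProduct, Matrix.of_apply, Pi.neg_apply,
      Pi.sub_apply, hd i, hA i]
    rw [Fintype.sum_prod_type]
    rw [Finset.sum_eq_single i]
    · simp [Finset.sum_sub_distrib]
    · intro j _ hj
      simp [hj]
    · intro h
      exact absurd (Finset.mem_univ i) h
  set A := Q⁻¹ * Eᵀ * (E * Q⁻¹ * Eᵀ)⁻¹ with hAdef
  have hMc : M *ᵥ c = (h0 - s) + A *ᵥ d := by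
    rw [hM, Matrix.sub_mulVec, hQc]
    have : (Q⁻¹ * Eᵀ * (E * Q⁻¹ * Eᵀ)⁻¹ * (E * Q⁻¹)) *ᵥ c
        = A *ᵥ (E *ᵥ (Q⁻¹ *ᵥ c)) := by
      rw [Matrix.mulVec_mulVec, Matrix.mulVec_mulVec, hAdef]
      congr 1
      simp only [Matrix.mul_assoc]
    rw [this, hQc, hEc, Matrix.mulVec_neg]
    abel
  have hrval : r = s - h0 := by
    rw [hr, hMc]
    abel
  refine ⟨hrval, ?_⟩
  constructor <;> intro h ik <;> have := h ik <;>
    simp [hrval, hu, sub_lt_sub_iff_left] at this ⊢ <;> linarith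
end
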